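/- Every torsionfree group that contains a cyclic subgroup of finite index is either trivial or infinite cyclic. Equivalently, a torsionfree virtually cyclic group is trivial or isomorphic to ℤ. -/

import Mathlib

/-!
Let `N` be the normal core of the cyclic subgroup `H`, generated by `x`. For any `g`, conjugation
by `g` sends `x` to some `x ^ k` and fixes `g ^ [G : N] = x ^ j`, so `x ^ (k * j) = x ^ j`;
torsion-freeness gives `j ≠ 0` unless `g = 1`, hence `k = 1` and `N` is central. Once the centre
has finite index, the transfer `g ↦ g ^ [G : Z(G)]` is a homomorphism into the centre, injective
by torsion-freeness, so `G` is abelian. Then `g ↦ g ^ [G : H]` embeds `G` into the cyclic group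
`H`, and a nontrivial torsion-free cyclic group is `ℤ`.
-/

/-- A monoid is torsion-free if no nontrivial elements have finite order
(the definition `Monoid.IsTorsionFree` of the older Mathlib). -/
def Monoid.IsTorsionFree (G : Type*) [Monoid G] : Prop :=
  ∀ g : G, g ≠ 1 → ¬IsOfFinOrder g

open Subgroup Function

namespace Monoid.IsTorsionFree

variable {G : Type*} [Group G]

theorem eq_one_of_pow_eq_one (htf : Monoid.IsTorsionFree G) {g : G} {n : ℕ} (hn : n ≠ 0)
    (h : g ^ n = 1) : g = 1 := by
  by_contra hg
  exact htf g hg (isOfFinOrder_iff_pow_eq_one.mpr ⟨n, Nat.pos_of_ne_zero hn, h⟩)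

theorem zpow_injective (htf : Monoid.IsTorsionFree G) {x : G} (hx : x ≠ 1) :
    Injective (x ^ · : ℤ → G) :=
  injective_zpow_iff_not_isOfFinOrder.mpr (htf x hx)

theorem commute_of_conj_mem_zpowers (htf : Monoid.IsTorsionFree G) {g x : G} {m : ℕ}
    (hm : m ≠ 0) (hconj : g * x * g⁻¹ ∈ zpowers x) (hpow : g ^ m ∈ zpowers x) :
    Commute g x := by
  rcases eq_or_ne x 1 with rfl | hx
  · exact Commute.one_right g
  obtain ⟨k, hk⟩ := mem_zpowers_iff.mp hconj
  obtain ⟨j, hj⟩ := mem_zpowers_iff.mp hpow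
  rcases eq_or_ne j 0 with rfl | hj0
  · have hg : g = 1 := htf.eq_one_of_pow_eq_one hm (by rw [← hj, zpow_zero])
    exact hg ▸ Commute.one_left x
  have hkj : k * j = 1 * j := htf.zpow_injective hx <| by
    calc x ^ (k * j) = (g * x * g⁻¹) ^ j := by rw [zpow_mul, hk]
      _ = g * g ^ m * g⁻¹ := by rw [conj_zpow, hj]
      _ = x ^ (1 * j) := by rw [one_mul, hj]; group
  have hk1 : k = 1 := mul_right_cancel₀ hj0 hkj
  rw [hk1, zpow_one, eq_mul_inv_iff_mul_eq] at hk
  exact hk.symm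

theorem le_center_of_isCyclic (htf : Monoid.IsTorsionFree G) (N : Subgroup G) [N.Normal]
    [IsCyclic N] [N.FiniteIndex] : N ≤ center G := by
  obtain ⟨x, hx⟩ := N.isCyclic_iff_exists_zpowers_eq_top.mp ‹_›
  have hxN : x ∈ N := hx ▸ mem_zpowers x
  rw [← hx, zpowers_le, mem_center_iff]
  intro g
  refine (htf.commute_of_conj_mem_zpowers (FiniteIndex.index_ne_zero (H := N)) ?_ ?_).eq
  · exact hx ▸ Normal.conj_mem ‹_› x hxN g
  · exact hx ▸ N.pow_index_mem g

theorem isMulCommutative_of_finiteIndex_center (htf : Monoid.IsTorsionFree G)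
    [(center G).FiniteIndex] : IsMulCommutative G := by
  have hinj : Injective (MonoidHom.transferCenterPow G) :=
    (injective_iff_map_eq_one _).mpr fun _ hg ↦
      htf.eq_one_of_pow_eq_one FiniteIndex.index_ne_zero (congrArg Subtype.val hg)
  exact isMulCommutative_iff.mpr fun a b ↦ hinj (by rw [map_mul, map_mul, mul_comm'])

open scoped IsMulCommutative in
theorem isCyclic_of_finiteIndex [IsMulCommutative G] (htf : Monoid.IsTorsionFree G)
    (H : Subgroup G) [IsCyclic H] [H.FiniteIndex] : IsCyclic G :=
  isCyclic_of_injective ((powMonoidHom H.index).codRestrict H H.pow_index_mem) <|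
    (injective_iff_map_eq_one _).mpr fun _ hg ↦
      htf.eq_one_of_pow_eq_one FiniteIndex.index_ne_zero (congrArg Subtype.val hg)

theorem infinite [Nontrivial G] (htf : Monoid.IsTorsionFree G) : Infinite G := by
  by_contra hfin
  have : Finite G := not_infinite_iff_finite.mp hfin
  obtain ⟨x, hx⟩ := exists_ne (1 : G)
  exact htf x hx (isOfFinOrder_of_finite x)

theorem subsingleton_or_nonempty_mulEquiv_int [IsCyclic G] (htf : Monoid.IsTorsionFree G) :
    Subsingleton G ∨ Nonempty (G ≃* Multiplicative ℤ) := by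
  rcases subsingleton_or_nontrivial G with hG | hG
  · exact Or.inl hG
  have : Infinite G := htf.infinite
  exact Or.inr ⟨mulEquivOfCyclicCardEq (by simp [Nat.card_eq_zero_of_infinite])⟩

end Monoid.IsTorsionFree

/-- Every torsionfree group containing a cyclic subgroup of finite index (i.e.
every torsionfree virtually cyclic group) is either trivial or infinite cyclic,
i.e. isomorphic to `ℤ`. -/
theorem torsionfree_virtually_cyclic (G : Type*) [Group G]
    (htf : Monoid.IsTorsionFree G)
    (h : ∃ H : Subgroup G, IsCyclic H ∧ H.FiniteIndex) :
    Subsingleton G ∨ Nonempty (G ≃* Multiplicative ℤ) := by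
  obtain ⟨H, hH, hHfin⟩ := h
  have : IsCyclic H.normalCore :=
    isCyclic_of_injective (inclusion H.normalCore_le) (inclusion_injective _)
  have : (center G).FiniteIndex := finiteIndex_of_le (htf.le_center_of_isCyclic H.normalCore)
  have : IsMulCommutative G := htf.isMulCommutative_of_finiteIndex_center
  have : IsCyclic G := htf.isCyclic_of_finiteIndex H
  exact htf.subsingleton_or_nonempty_mulEquiv_int
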